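/- arXiv:2601.15420 — 7 statements merged into one kernel-verified Lean document; each statement's English description precedes it below -/
import Mathlib

section
/- For a set-indexed family of sets (A_i)_{i∈I}, the family sending s : ℕ → I to Σ_{x ∈ ℕ∞} Π_{n∈ℕ} (x = n → A_{s(n)}) is the carrier of a terminal coalgebra for the endofunctor on I^ℕ-indexed families sending (B_s) to (A_{s(0)} + B_{s ∘ succ}). -/
/-- The conatural numbers: monotone decreasing binary sequences. -/
def Conat : Type := {p : ℕ → Bool // ∀ n, p (n + 1) = true → p n = true}

/-- The canonical embedding `ℕ → ℕ∞`. -/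
def Conat.ofNat (n : ℕ) : Conat :=
  ⟨fun k => decide (k < n), by
    intro k h
    simp only [decide_eq_true_eq] at *
    omega⟩

namespace TCaux

def tail (x : Conat) : Conat := ⟨fun k => x.1 (k + 1), fun n h => x.2 (n + 1) h⟩

lemma conat_ext {x y : Conat} (h : ∀ n, x.1 n = y.1 n) : x = y :=
  Subtype.ext (funext h)

lemma ofNat_val (n k : ℕ) : (Conat.ofNat n).1 k = decide (k < n) := rfl

lemma bit_of_eq {x : Conat} {n : ℕ} (h : x = Conat.ofNat n) (k : ℕ) :
    x.1 k = decide (k < n) := by rw [h]; rfl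

lemma zero_false {x : Conat} (h : x.1 0 = false) : x = Conat.ofNat 0 := by
  have hall : ∀ n, x.1 n = false := by
    intro n
    induction n with
    | zero => exact h
    | succ m ih =>
      cases hm : x.1 (m + 1) with
      | false => rfl
      | true => rw [x.2 m hm] at ih; simp at ih
  apply conat_ext
  intro n
  rw [hall n, ofNat_val]
  simp

lemma tail_ofNat {x : Conat} (h : x.1 0 = true) (n : ℕ) :
    x = Conat.ofNat (n + 1) ↔ tail x = Conat.ofNat n := by
  constructor
  · intro hx
    apply conat_ext
    intro k
    show x.1 (k + 1) = decide (k < n)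
    rw [bit_of_eq hx]
    simp only [decide_eq_decide]
    omega
  · intro hx
    apply conat_ext
    intro k
    cases k with
    | zero =>
      show x.1 0 = decide (0 < n + 1)
      simp [h]
    | succ m =>
      have := bit_of_eq hx m
      show x.1 (m + 1) = decide (m + 1 < n + 1)
      rw [show x.1 (m+1) = (tail x).1 m from rfl, this]
      simp only [decide_eq_decide]
      omega

section
variable {I : Type} (A : I → Type)

def Cc (s : ℕ → I) : Type := Σ x : Conat, ∀ n : ℕ, x = Conat.ofNat n → A (s n)

def cmap (s : ℕ → I) (p : Cc A s) : A (s 0) ⊕ Cc A (fun n => s (n + 1)) :=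
  if h : p.1.1 0 = true then
    .inr ⟨tail p.1, fun n hn => p.2 (n + 1) ((tail_ofNat h n).2 hn)⟩
  else
    .inl (p.2 0 (zero_false (Bool.eq_false_iff.mpr h)))

lemma Cc_ext {s : ℕ → I} {p q : Cc A s} (h1 : p.1 = q.1)
    (h2 : ∀ n (hp : p.1 = Conat.ofNat n) (hq : q.1 = Conat.ofNat n),
      p.2 n hp = q.2 n hq) : p = q := by
  obtain ⟨x, g⟩ := p
  obtain ⟨y, g'⟩ := q
  cases h1
  have : g = g' := by
    funext n hn
    exact h2 n hn hn
  rw [this]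

lemma Cc_apply_congr {s : ℕ → I} {p q : Cc A s} (e : p = q) (n : ℕ)
    (h1 : p.1 = Conat.ofNat n) (h2 : q.1 = Conat.ofNat n) :
    p.2 n h1 = q.2 n h2 := by subst e; rfl

lemma cmap_true {s : ℕ → I} {p : Cc A s} (h : p.1.1 0 = true) :
    cmap A s p = .inr ⟨tail p.1, fun n hn => p.2 (n + 1) ((tail_ofNat h n).2 hn)⟩ := by
  rw [cmap, dif_pos h]

lemma cmap_false {s : ℕ → I} {p : Cc A s} (h : p.1.1 0 = false)
    (hp : p.1 = Conat.ofNat 0) :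
    cmap A s p = .inl (p.2 0 hp) := by
  rw [cmap, dif_neg (by simp [h])]

variable {B : (ℕ → I) → Type} (β : ∀ s : ℕ → I, B s → A (s 0) ⊕ B (fun n => s (n + 1)))

def run : ∀ (n : ℕ) (s : ℕ → I), B s → Option (B (fun k => s (k + n)))
  | 0, _, b => some b
  | n + 1, s, b =>
    match β s b with
    | .inl _ => none
    | .inr b' => run n (fun k => s (k + 1)) b'

def extract : ∀ (n : ℕ) (s : ℕ → I), B s → Option (A (s n))
  | 0, s, b =>
    match β s b with
    | .inl a => some a
    | .inr _ => none
  | n + 1, s, b =>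
    match β s b with
    | .inl _ => none
    | .inr b' => extract n (fun k => s (k + 1)) b'

variable {β}

lemma run_inl {n : ℕ} {s : ℕ → I} {b : B s} {a : A (s 0)} (hβ : β s b = .inl a) :
    run A β (n + 1) s b = none := by
  simp [run, hβ]

lemma run_inr {n : ℕ} {s : ℕ → I} {b : B s} {b' : B (fun n => s (n + 1))}
    (hβ : β s b = .inr b') :
    run A β (n + 1) s b = run A β n (fun k => s (k + 1)) b' := by
  simp [run, hβ]

lemma extract_inl {s : ℕ → I} {b : B s} {a : A (s 0)} (hβ : β s b = .inl a) :
    extract A β 0 s b = some a := by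
  simp [extract, hβ]

lemma extract_inl' {n : ℕ} {s : ℕ → I} {b : B s} {a : A (s 0)} (hβ : β s b = .inl a) :
    extract A β (n + 1) s b = none := by
  simp [extract, hβ]

lemma extract_inr {n : ℕ} {s : ℕ → I} {b : B s} {b' : B (fun n => s (n + 1))}
    (hβ : β s b = .inr b') :
    extract A β (n + 1) s b = extract A β n (fun k => s (k + 1)) b' := by
  simp [extract, hβ]

variable (β)

lemma run_mono : ∀ (n : ℕ) (s : ℕ → I) (b : B s),
    (run A β (n + 1) s b).isSome = true → (run A β n s b).isSome = true := by
  intro n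
  induction n with
  | zero => intro s b _; rfl
  | succ m ih =>
    intro s b h
    cases hβ : β s b with
    | inl a => rw [run_inl A hβ] at h; simp at h
    | inr b' =>
      rw [run_inr A hβ] at h ⊢
      exact ih _ b' h

def conatOf (s : ℕ → I) (b : B s) : Conat :=
  ⟨fun n => (run A β (n + 1) s b).isSome, fun n h => run_mono A β (n + 1) s b h⟩

lemma conatOf_bit (s : ℕ → I) (b : B s) (n : ℕ) :
    (conatOf A β s b).1 n = (run A β (n + 1) s b).isSome := rfl

variable {β}

lemma conatOf_inl {s : ℕ → I} {b : B s} {a : A (s 0)} (hβ : β s b = .inl a) :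
    conatOf A β s b = Conat.ofNat 0 := by
  apply conat_ext
  intro n
  rw [conatOf_bit, run_inl A hβ, ofNat_val]
  simp

lemma conatOf_inr {s : ℕ → I} {b : B s} {b' : B (fun n => s (n + 1))}
    (hβ : β s b = .inr b') :
    tail (conatOf A β s b) = conatOf A β (fun k => s (k + 1)) b' := by
  apply conat_ext
  intro n
  show (run A β (n + 2) s b).isSome = (run A β (n + 1) (fun k => s (k + 1)) b').isSome
  rw [run_inr A hβ]

variable (β)

lemma extract_isSome : ∀ (n : ℕ) (s : ℕ → I) (b : B s),
    conatOf A β s b = Conat.ofNat n → (extract A β n s b).isSome := by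
  intro n
  induction n with
  | zero =>
    intro s b h
    cases hβ : β s b with
    | inl a => rw [extract_inl A hβ]; rfl
    | inr b' =>
      have h0 := bit_of_eq h 0
      rw [conatOf_bit, run_inr A hβ] at h0
      simp [run] at h0
  | succ m ih =>
    intro s b h
    cases hβ : β s b with
    | inl a =>
      have h0 := bit_of_eq h 0
      rw [conatOf_bit, run_inl A hβ] at h0
      simp at h0
    | inr b' =>
      have h0 : (conatOf A β s b).1 0 = true := by
        rw [bit_of_eq h]; simp
      have ht : conatOf A β (fun k => s (k + 1)) b' = Conat.ofNat m := by
        rw [← conatOf_inr A hβ]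
        exact (tail_ofNat h0 m).1 h
      rw [extract_inr A hβ]
      exact ih _ b' ht

def f0 (s : ℕ → I) (b : B s) : Cc A s :=
  ⟨conatOf A β s b, fun n h => (extract A β n s b).get (extract_isSome A β n s b h)⟩

lemma f0_spec (s : ℕ → I) (b : B s) :
    cmap A s (f0 A β s b) = Sum.map id (f0 A β (fun n => s (n + 1))) (β s b) := by
  cases hβ : β s b with
  | inl a =>
    have h0 : (f0 A β s b).1.1 0 = false := by
      show (run A β 1 s b).isSome = false
      rw [run_inl A hβ]; rfl
    rw [cmap_false A h0 (conatOf_inl A hβ), Sum.map_inl, id]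
    congr 1
    show (extract A β 0 s b).get _ = a
    simp [extract_inl A hβ]
  | inr b' =>
    have h0 : (f0 A β s b).1.1 0 = true := by
      show (run A β 1 s b).isSome = true
      rw [run_inr A hβ]; rfl
    rw [cmap_true A h0, Sum.map_inr]
    congr 1
    apply Cc_ext
    · exact conatOf_inr A hβ
    · intro n hp hq
      show (extract A β (n + 1) s b).get _ = (extract A β n (fun k => s (k + 1)) b').get _
      simp only [extract_inr A hβ]

lemma claim1 (f : ∀ s : ℕ → I, B s → Cc A s)
    (hf : ∀ (s : ℕ → I) (b : B s),
      cmap A s (f s b) = Sum.map id (f (fun n => s (n + 1))) (β s b)) :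
    ∀ (n : ℕ) (s : ℕ → I) (b : B s), (f s b).1.1 n = (run A β (n + 1) s b).isSome := by
  intro n
  induction n with
  | zero =>
    intro s b
    cases hβ : β s b with
    | inl a =>
      have hc : cmap A s (f s b) = .inl a := by rw [hf s b, hβ]; rfl
      have h0 : (f s b).1.1 0 = false := by
        cases h0 : (f s b).1.1 0 with
        | false => rfl
        | true => rw [cmap_true A h0] at hc; simp at hc
      rw [h0, run_inl A hβ]; rfl
    | inr b' =>
      have hc : cmap A s (f s b) = .inr (f (fun n => s (n + 1)) b') := by
        rw [hf s b, hβ]; rfl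
      have h0 : (f s b).1.1 0 = true := by
        cases h0 : (f s b).1.1 0 with
        | true => rfl
        | false => rw [cmap_false A h0 (zero_false h0)] at hc; simp at hc
      rw [h0, run_inr A hβ]; rfl
  | succ m ih =>
    intro s b
    cases hβ : β s b with
    | inl a =>
      have hc : cmap A s (f s b) = .inl a := by rw [hf s b, hβ]; rfl
      have h0 : (f s b).1.1 0 = false := by
        cases h0 : (f s b).1.1 0 with
        | false => rfl
        | true => rw [cmap_true A h0] at hc; simp at hc
      rw [bit_of_eq (zero_false h0), run_inl A hβ]
      simp
    | inr b' =>
      have hc : cmap A s (f s b) = .inr (f (fun n => s (n + 1)) b') := by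
        rw [hf s b, hβ]; rfl
      have h0 : (f s b).1.1 0 = true := by
        cases h0 : (f s b).1.1 0 with
        | true => rfl
        | false => rw [cmap_false A h0 (zero_false h0)] at hc; simp at hc
      rw [cmap_true A h0] at hc
      have he := Sum.inr.inj hc
      have h1 : tail (f s b).1 = (f (fun n => s (n + 1)) b').1 := congrArg Sigma.fst he
      have : (f s b).1.1 (m + 1) = (f (fun n => s (n + 1)) b').1.1 m := by
        rw [← h1]; rfl
      rw [this, ih _ b', run_inr A hβ]

lemma claim2 (f : ∀ s : ℕ → I, B s → Cc A s)
    (hf : ∀ (s : ℕ → I) (b : B s),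
      cmap A s (f s b) = Sum.map id (f (fun n => s (n + 1))) (β s b)) :
    ∀ (n : ℕ) (s : ℕ → I) (b : B s) (hx : (f s b).1 = Conat.ofNat n)
      (hs : (extract A β n s b).isSome),
      (f s b).2 n hx = (extract A β n s b).get hs := by
  intro n
  induction n with
  | zero =>
    intro s b hx hs
    cases hβ : β s b with
    | inl a =>
      have hc : cmap A s (f s b) = .inl a := by rw [hf s b, hβ]; rfl
      have h0 : (f s b).1.1 0 = false := by rw [bit_of_eq hx]; simp
      rw [cmap_false A h0 hx] at hc
      have := Sum.inl.inj hc
      rw [this]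
      simp [extract_inl A hβ]
    | inr b' =>
      exfalso
      have hc : cmap A s (f s b) = .inr (f (fun n => s (n + 1)) b') := by
        rw [hf s b, hβ]; rfl
      have h0 : (f s b).1.1 0 = false := by rw [bit_of_eq hx]; simp
      rw [cmap_false A h0 hx] at hc
      simp at hc
  | succ m ih =>
    intro s b hx hs
    have h0 : (f s b).1.1 0 = true := by rw [bit_of_eq hx]; simp
    cases hβ : β s b with
    | inl a =>
      exfalso
      have hc : cmap A s (f s b) = .inl a := by rw [hf s b, hβ]; rfl
      rw [cmap_true A h0] at hc
      simp at hc
    | inr b' =>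
      have hc : cmap A s (f s b) = .inr (f (fun n => s (n + 1)) b') := by
        rw [hf s b, hβ]; rfl
      rw [cmap_true A h0] at hc
      have he := Sum.inr.inj hc
      have h1 : (f (fun n => s (n + 1)) b').1 = Conat.ofNat m := by
        rw [← congrArg Sigma.fst he]
        exact (tail_ofNat h0 m).1 hx
      have hs' : (extract A β m (fun k => s (k + 1)) b').isSome := by
        rw [← extract_inr A hβ]; exact hs
      have step := ih (fun k => s (k + 1)) b' h1 hs'
      have h2 : tail (f s b).1 = Conat.ofNat m := (tail_ofNat h0 m).1 hx
      have lhs_eq : (f s b).2 (m + 1) hx =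
          (f (fun n => s (n + 1)) b').2 m h1 := by
        have := Cc_apply_congr A he.symm m h1 h2
        rw [this]
      rw [lhs_eq, step]
      simp only [extract_inr A hβ]

end

end TCaux

/-- For a family of sets `(A i)_{i ∈ I}`, the family
`s ↦ Σ_{x ∈ ℕ∞} Π_{n ∈ ℕ} (x = n̲ → A (s n))` over `s : ℕ → I` is the carrier
of a terminal coalgebra for the endofunctor on `(ℕ → I)`-indexed families
sending `(B_s)` to `(A (s 0) + B (s ∘ succ))_s`. -/
theorem conat_family_terminal_coalgebra {I : Type} (A : I → Type) :
    ∃ c : ∀ s : ℕ → I,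
        (Σ x : Conat, ∀ n : ℕ, x = Conat.ofNat n → A (s n)) →
        (A (s 0) ⊕ Σ x : Conat, ∀ n : ℕ, x = Conat.ofNat n → A (s (n + 1))),
      ∀ (B : (ℕ → I) → Type)
        (β : ∀ s : ℕ → I, B s → A (s 0) ⊕ B (fun n => s (n + 1))),
        ∃! f : ∀ s : ℕ → I, B s →
            Σ x : Conat, ∀ n : ℕ, x = Conat.ofNat n → A (s n),
          ∀ (s : ℕ → I) (b : B s),
            c s (f s b) = Sum.map id (f (fun n => s (n + 1))) (β s b) := by
  refine ⟨TCaux.cmap A, ?_⟩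
  intro B β
  refine ⟨TCaux.f0 A β, fun s b => TCaux.f0_spec A β s b, ?_⟩
  intro f hf
  funext s b
  apply TCaux.Cc_ext
  · apply TCaux.conat_ext
    intro n
    exact TCaux.claim1 A β f hf n s b
  · intro n hp hq
    exact TCaux.claim2 A β f hf n s b hp (TCaux.extract_isSome A β n s b hq)
end

section
/- For containers P, Q, R over Set, there is a morphism of containers (Q ⋆ P) × R → (Q × R) ⋆ P, natural in all three arguments. -/
open CategoryTheory

/-- A container over `Set`: a family of sets `(A i)_{i ∈ I}`. -/
structure Ctnr : Type 1 where
  I : Type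
  A : I → Type

/-- A morphism of containers: a forward map on shapes and a backward map on
directions. -/
@[ext]
structure CtnrHom (P Q : Ctnr) : Type where
  fwd : P.I → Q.I
  bwd : ∀ i : P.I, Q.A (fwd i) → P.A i

instance : Category Ctnr where
  Hom := CtnrHom
  id _ := ⟨fun i => i, fun _ a => a⟩
  comp f g := ⟨fun i => g.fwd (f.fwd i), fun i b => f.bwd i (g.bwd (f.fwd i) b)⟩
  id_comp _ := rfl
  comp_id _ := rfl
  assoc _ _ _ := rfl

/-- The product of containers: shape `I × J`, directions at `(i,j)` given by
`A i + B j`. -/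
def prodC (P Q : Ctnr) : Ctnr :=
  ⟨P.I × Q.I, fun x => P.A x.1 ⊕ Q.A x.2⟩

/-- The sequential product `Q ⋆ P := seqC Q P`: shape `Σ_{i ∈ I} (A i → J)`,
directions at `(i, g)` given by `Σ_{a ∈ A i} B (g a)`. -/
def seqC (Q P : Ctnr) : Ctnr :=
  ⟨Σ i : P.I, (P.A i → Q.I), fun x => Σ a : P.A x.1, Q.A (x.2 a)⟩

/-- Functorial action of the product on container morphisms. -/
def prodMap {P P' Q Q' : Ctnr} (f : P ⟶ P') (g : Q ⟶ Q') :
    prodC P Q ⟶ prodC P' Q' where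
  fwd x := (f.fwd x.1, g.fwd x.2)
  bwd x := Sum.map (f.bwd x.1) (g.bwd x.2)

/-- Functorial action of the sequential product on container morphisms
(`f` acts on the outer factor, `g` on the inner one). -/
def seqMap {Q Q' P P' : Ctnr} (f : Q ⟶ Q') (g : P ⟶ P') :
    seqC Q P ⟶ seqC Q' P' where
  fwd x := ⟨g.fwd x.1, fun a' => f.fwd (x.2 (g.bwd x.1 a'))⟩
  bwd x d := ⟨g.bwd x.1 d.1, f.bwd (x.2 (g.bwd x.1 d.1)) d.2⟩

/-- There is a morphism of containers `(Q ⋆ P) × R → (Q × R) ⋆ P`, natural in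
all three arguments. -/
theorem seq_prod_interchange :
    ∃ θ : ∀ P Q R : Ctnr, prodC (seqC Q P) R ⟶ seqC (prodC Q R) P,
      ∀ {P P' Q Q' R R' : Ctnr} (p : P ⟶ P') (q : Q ⟶ Q') (r : R ⟶ R'),
        θ P Q R ≫ seqMap (prodMap q r) p = prodMap (seqMap q p) r ≫ θ P' Q' R' := by
  refine ⟨fun P Q R => ⟨fun x => ⟨x.1.1, fun a => (x.1.2 a, x.2)⟩,
      fun x d => Sum.rec (fun b => Sum.inl ⟨d.1, b⟩) Sum.inr d.2⟩, ?_⟩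
  intro P P' Q Q' R R' p q r
  refine CtnrHom.ext rfl (heq_of_eq ?_)
  funext x d
  obtain ⟨a, b | c⟩ := d <;> rfl
end

section
/- If F is an endofunctor on containers over Set such that for every container X among {0, 𝟙, 1} the container F(X) is degree-equivalent to 0, 𝟙, or 1, and F preserves the reducibility preorder, then the carrier of any initial algebra of F is degree-equivalent to F(F(0)). -/
open CategoryTheory

/-- Reducibility: `P ≤ Q` iff there exists a container morphism `P → Q`. -/
def red (P Q : Ctnr) : Prop := Nonempty (P ⟶ Q)

/-- Degree equivalence. -/
def eqv (P Q : Ctnr) : Prop := red P Q ∧ red Q P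

/-- The empty container `0`. -/
def zeroCtnr : Ctnr := ⟨Empty, fun _ => Empty⟩

/-- The container `𝟙`: one shape, one direction. -/
def unitCtnr : Ctnr := ⟨PUnit, fun _ => PUnit⟩

/-- The container `1`: one shape, no directions. -/
def oneCtnr : Ctnr := ⟨PUnit, fun _ => Empty⟩

/-- If `F` is an answer-trivial endofunctor on containers over `Set` (in
particular it preserves the reducibility preorder, being a functor), then the
carrier of any initial algebra of `F` is degree-equivalent to `F (F 0)`. -/
theorem initial_algebra_answer_trivial
    (F : Ctnr → Ctnr)
    (Fmap : ∀ {X Y : Ctnr}, (X ⟶ Y) → (F X ⟶ F Y))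
    (Fmap_id : ∀ X : Ctnr, Fmap (𝟙 X) = 𝟙 (F X))
    (Fmap_comp : ∀ {X Y Z : Ctnr} (f : X ⟶ Y) (g : Y ⟶ Z),
      Fmap (f ≫ g) = Fmap f ≫ Fmap g)
    (Ftriv : ∀ X : Ctnr, (X = zeroCtnr ∨ X = unitCtnr ∨ X = oneCtnr) →
      (eqv (F X) zeroCtnr ∨ eqv (F X) unitCtnr ∨ eqv (F X) oneCtnr))
    (C : Ctnr) (α : F C ⟶ C)
    (init : ∀ (X : Ctnr) (β : F X ⟶ X), ∃! f : C ⟶ X, α ≫ f = Fmap f ≫ β) :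
    eqv C (F (F zeroCtnr)) := by
  have red_trans : ∀ {P Q R : Ctnr}, red P Q → red Q R → red P R := by
    rintro P Q R ⟨f⟩ ⟨g⟩; exact ⟨f ≫ g⟩
  have red_zero : ∀ P : Ctnr, red zeroCtnr P :=
    fun P => ⟨⟨fun i => i.elim, fun i => i.elim⟩⟩
  have red_top : ∀ P : Ctnr, red P oneCtnr :=
    fun P => ⟨⟨fun _ => PUnit.unit, fun _ e => e.elim⟩⟩
  have mono : ∀ {P Q : Ctnr}, red P Q → red (F P) (F Q) := by
    rintro P Q ⟨f⟩; exact ⟨Fmap f⟩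
  have hcong : ∀ {P Q : Ctnr}, eqv P Q → eqv (F P) (F Q) :=
    fun h => ⟨mono h.1, mono h.2⟩
  have notUZ : ¬ red unitCtnr zeroCtnr := by
    rintro ⟨f⟩; exact (f.fwd PUnit.unit).elim
  -- F 0 ≤ F² 0
  have h01 : red (F zeroCtnr) (F (F zeroCtnr)) := mono (red_zero (F zeroCtnr))
  -- key: F³ 0 ≤ F² 0
  have hF3 : red (F (F (F zeroCtnr))) (F (F zeroCtnr)) := by
    obtain hW | hW | hW := Ftriv zeroCtnr (Or.inl rfl)
    · -- F 0 ≡ 0, so F² 0 ≡ F 0, so F³ 0 ≤ F² 0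
      exact mono (mono hW.1)
    · -- F 0 ≡ 𝟙
      obtain hV | hV | hV := Ftriv unitCtnr (Or.inr (Or.inl rfl))
      · -- F 𝟙 ≡ 0: contradiction since 𝟙 ≤ F 0 ≤ F² 0 ≡ F 𝟙 ≡ 0
        exact absurd (red_trans hW.2 (red_trans h01 (red_trans (mono hW.1) hV.1))) notUZ
      · -- F 𝟙 ≡ 𝟙: F² 0 ≡ F 𝟙 ≡ 𝟙 ≡ F 0
        have h2 : red (F (F zeroCtnr)) (F zeroCtnr) :=
          red_trans (mono hW.1) (red_trans hV.1 hW.2)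
        exact mono h2
      · -- F 𝟙 ≡ 1: F² 0 ≡ 1 is top
        exact red_trans (red_top _) (red_trans hV.2 (mono hW.2))
    · -- F 0 ≡ 1: then 1 ≤ F 0 ≤ F² 0
      exact red_trans (red_top _) (red_trans hW.2 h01)
  obtain ⟨β⟩ := hF3
  obtain ⟨f, -, -⟩ := init (F (F zeroCtnr)) β
  exact ⟨⟨f⟩, red_trans (mono (mono (red_zero C))) ⟨Fmap α ≫ α⟩⟩
end

section
/- Dually, if F is a monotone, answer-trivial endofunctor on containers over Set admitting a terminal coalgebra with carrier νF, then νF is degree-equivalent to F(F(1)). -/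
open CategoryTheory

/-- Every container has a morphism to `1`. -/
def toOne (X : Ctnr) : X ⟶ oneCtnr := ⟨fun _ => PUnit.unit, fun _ e => e.elim⟩

/-- `0` has a morphism to every container. -/
def fromZero (X : Ctnr) : zeroCtnr ⟶ X := ⟨Empty.elim, fun i => i.elim⟩

/-- A morphism `𝟙 ⟶ 1`. -/
def unitToOne : unitCtnr ⟶ oneCtnr := ⟨fun _ => PUnit.unit, fun _ e => e.elim⟩

/-- Dually, if `F` is an answer-trivial endofunctor on containers over `Set`
admitting a terminal coalgebra with carrier `νF`, then `νF` is
degree-equivalent to `F (F 1)`. -/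
theorem terminal_coalgebra_answer_trivial
    (F : Ctnr → Ctnr)
    (Fmap : ∀ {X Y : Ctnr}, (X ⟶ Y) → (F X ⟶ F Y))
    (Fmap_id : ∀ X : Ctnr, Fmap (𝟙 X) = 𝟙 (F X))
    (Fmap_comp : ∀ {X Y Z : Ctnr} (f : X ⟶ Y) (g : Y ⟶ Z),
      Fmap (f ≫ g) = Fmap f ≫ Fmap g)
    (Ftriv : ∀ X : Ctnr, (X = zeroCtnr ∨ X = unitCtnr ∨ X = oneCtnr) →
      (eqv (F X) zeroCtnr ∨ eqv (F X) unitCtnr ∨ eqv (F X) oneCtnr))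
    (C : Ctnr) (γ : C ⟶ F C)
    (term : ∀ (X : Ctnr) (β : X ⟶ F X), ∃! f : X ⟶ C, β ≫ Fmap f = f ≫ γ) :
    eqv C (F (F oneCtnr)) := by
  constructor
  · -- `C ⟶ F (F 1)` always exists, using `γ` twice and the map to `1`.
    exact ⟨γ ≫ Fmap (γ ≫ Fmap (toOne C))⟩
  · -- Conversely, build a coalgebra structure on `F (F 1)` (or go through `0`).
    rcases Ftriv oneCtnr (Or.inr (Or.inr rfl)) with ⟨⟨u⟩, ⟨v⟩⟩ | ⟨⟨u⟩, ⟨v⟩⟩ | ⟨⟨u⟩, ⟨v⟩⟩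
    · -- `F 1 ≈ 0`
      obtain ⟨f, -⟩ := (term (F (F oneCtnr))
        (Fmap (u ≫ fromZero (F (F oneCtnr))))).exists
      exact ⟨f⟩
    · -- `F 1 ≈ 𝟙`; sub-case on `F 𝟙`
      rcases Ftriv unitCtnr (Or.inr (Or.inl rfl)) with ⟨⟨u'⟩, ⟨v'⟩⟩ | ⟨⟨u'⟩, ⟨v'⟩⟩ | ⟨⟨u'⟩, ⟨v'⟩⟩
      · -- `F 𝟙 ≈ 0`: then `F (F 1) ⟶ F 𝟙 ⟶ 0 ⟶ C`.
        exact ⟨Fmap u ≫ u' ≫ fromZero C⟩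
      · -- `F 𝟙 ≈ 𝟙`
        obtain ⟨f, -⟩ := (term (F (F oneCtnr))
          (Fmap (u ≫ v' ≫ Fmap v))).exists
        exact ⟨f⟩
      · -- `F 𝟙 ≈ 1`
        obtain ⟨f, -⟩ := (term (F (F oneCtnr))
          (Fmap (u ≫ unitToOne ≫ v' ≫ Fmap v))).exists
        exact ⟨f⟩
    · -- `F 1 ≈ 1`
      obtain ⟨f, -⟩ := (term (F (F oneCtnr)) (Fmap (Fmap v))).exists
      exact ⟨f⟩
end

section
/- In the theory of Weihrauch-style reducibility of containers over Set: if there is a container morphism R × (Q ⋆ P) → Q, then there is a container morphism R × (Q ⋆ P^◇) → Q, where P^◇ is the carrier of the initial algebra of X ↦ 𝟙 + X ⋆ P (assumed to exist), provided the category of containers is cartesian closed with exponential ⇒ satisfying the usual currying adjunction. -/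
open CategoryTheory

/-- The coproduct of containers. -/
def coprodC (P Q : Ctnr) : Ctnr :=
  ⟨P.I ⊕ Q.I, fun x => Sum.rec (fun i => P.A i) (fun j => Q.A j) x⟩

/-- Functorial action of the coproduct. -/
def coprodMap {P P' Q Q' : Ctnr} (f : P ⟶ P') (g : Q ⟶ Q') :
    coprodC P Q ⟶ coprodC P' Q' where
  fwd := Sum.map f.fwd g.fwd
  bwd x := match x with
    | .inl i => f.bwd i
    | .inr j => g.bwd j


/-- Shapes of the concrete list container over `P`. -/
inductive LIsh (P : Ctnr) : Type
  | nil : LIsh P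
  | cons (i : P.I) (k : P.A i → LIsh P) : LIsh P

/-- Directions (paths) of the concrete list container over `P`. -/
def LAdir (P : Ctnr) : LIsh P → Type
  | .nil => PUnit
  | .cons i k => Σ a : P.A i, LAdir P (k a)

/-- The concrete list container over `P`. -/
def Lc (P : Ctnr) : Ctnr := ⟨LIsh P, LAdir P⟩

/-- The concrete algebra structure on `Lc P`. -/
def alphaL (P : Ctnr) : coprodC unitCtnr (seqC (Lc P) P) ⟶ Lc P where
  fwd x := match x with
    | .inl _ => .nil
    | .inr ⟨i, t⟩ => .cons i t
  bwd x := match x with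
    | .inl _ => fun d => d
    | .inr ⟨_, _⟩ => fun d => d

/-- Forward part of the concrete morphism `R × (Q ⋆ Lc P) ⟶ Q`. -/
def Ffwd (P Q R : Ctnr) (h : prodC R (seqC Q P) ⟶ Q) (r : R.I) :
    (l : LIsh P) → (LAdir P l → Q.I) → Q.I
  | .nil, k => k ⟨⟩
  | .cons i t, k =>
      h.fwd (r, ⟨i, fun a => Ffwd P Q R h r (t a) (fun p => k ⟨a, p⟩)⟩)

/-- Backward part of the concrete morphism `R × (Q ⋆ Lc P) ⟶ Q`. -/
def Fbwd (P Q R : Ctnr) (h : prodC R (seqC Q P) ⟶ Q) (r : R.I) :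
    (l : LIsh P) → (k : LAdir P l → Q.I) → Q.A (Ffwd P Q R h r l k) →
      R.A r ⊕ Σ p : LAdir P l, Q.A (k p)
  | .nil, _, d => Sum.inr ⟨⟨⟩, d⟩
  | .cons i t, k, d =>
      match h.bwd (r, ⟨i, fun a => Ffwd P Q R h r (t a) (fun p => k ⟨a, p⟩)⟩) d with
      | Sum.inl ra => Sum.inl ra
      | Sum.inr ⟨a, d'⟩ =>
          match Fbwd P Q R h r (t a) (fun p => k ⟨a, p⟩) d' with
          | Sum.inl ra => Sum.inl ra
          | Sum.inr ⟨p, d''⟩ => Sum.inr ⟨⟨a, p⟩, d''⟩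

/-- The concrete morphism `R × (Q ⋆ Lc P) ⟶ Q` built from `h`. -/
def Fmor (P Q R : Ctnr) (h : prodC R (seqC Q P) ⟶ Q) :
    prodC R (seqC Q (Lc P)) ⟶ Q where
  fwd x := Ffwd P Q R h x.1 x.2.1 x.2.2
  bwd x d := Fbwd P Q R h x.1 x.2.1 x.2.2 d

/-- If there is a container morphism `R × (Q ⋆ P) → Q`, then there is a
container morphism `R × (Q ⋆ P^◇) → Q`, where `P^◇` (here `D`) is the
carrier of the initial algebra of `X ↦ 𝟙 + X ⋆ P` (assumed to exist),
provided the category of containers is cartesian closed with exponential `⇒`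
satisfying the usual currying adjunction. -/
theorem diamond_generalised_induction
    (P Q R D : Ctnr)
    -- the exponential and the currying adjunction
    (Exp : Ctnr → Ctnr → Ctnr)
    (ev : ∀ R' Q' : Ctnr, prodC (Exp R' Q') R' ⟶ Q')
    (curry : ∀ {S R' Q' : Ctnr}, (prodC S R' ⟶ Q') → (S ⟶ Exp R' Q'))
    (curry_eq : ∀ {S R' Q' : Ctnr} (f : prodC S R' ⟶ Q'),
      prodMap (curry f) (𝟙 R') ≫ ev R' Q' = f)
    (curry_unique : ∀ {S R' Q' : Ctnr} (f : prodC S R' ⟶ Q') (g : S ⟶ Exp R' Q'),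
      prodMap g (𝟙 R') ≫ ev R' Q' = f → g = curry f)
    -- `D = P^◇` is the carrier of the initial algebra of `X ↦ 𝟙 + X ⋆ P`
    (α : coprodC unitCtnr (seqC D P) ⟶ D)
    (init : ∀ (X : Ctnr) (β : coprodC unitCtnr (seqC X P) ⟶ X),
      ∃! f : D ⟶ X, α ≫ f = coprodMap (𝟙 unitCtnr) (seqMap f (𝟙 P)) ≫ β)
    -- the hypothesis
    (h : prodC R (seqC Q P) ⟶ Q) :
    Nonempty (prodC R (seqC Q D) ⟶ Q) := by
  obtain ⟨φ, -, -⟩ := init (Lc P) (alphaL P)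
  exact ⟨prodMap (𝟙 R) (seqMap (𝟙 Q) φ) ≫ Fmor P Q R h⟩
end

section
/- Q ⋆ P^◇ carries an initial algebra structure for the endofunctor X ↦ Q + X ⋆ P on containers over Set, where P^◇ is the free-monad container of P (the carrier of the initial algebra of X ↦ 𝟙 + X ⋆ P). -/
open CategoryTheory

/-- Well-founded trees with nodes labelled by shapes of `P` (children indexed
by the corresponding directions) or leaves `●`: the initial algebra of
`X ↦ 1 + Σ_{i ∈ I} (A i → X)` in `Set`. -/
inductive WTree (P : Ctnr) : Type where
  | leaf : WTree P
  | node (i : P.I) (k : P.A i → WTree P) : WTree P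

/-- The set of leaves of a well-founded tree. -/
def WTree.Leaf {P : Ctnr} : WTree P → Type
  | .leaf => PUnit
  | .node i k => Σ a : P.A i, (k a).Leaf

/-- The free-monad container `P^◇`: shapes are well-founded trees, directions
are their leaves. -/
def diamondC (P : Ctnr) : Ctnr := ⟨WTree P, WTree.Leaf⟩


/-- The structure map of the initial algebra. -/
def algC (P Q : Ctnr) : coprodC Q (seqC (seqC Q (diamondC P)) P) ⟶ seqC Q (diamondC P) where
  fwd s := match s with
    | .inl j => ⟨WTree.leaf, fun _ => j⟩
    | .inr x => ⟨WTree.node x.1 (fun a => (x.2 a).1), fun l => (x.2 l.1).2 l.2⟩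
  bwd s := match s with
    | .inl _ => fun d => d.2
    | .inr _ => fun d => ⟨d.1.1, d.1.2, d.2⟩

/-- The fold, by recursion on trees: for each shape of `Q ⋆ P^◇`, a shape of
`X` and a backward map. -/
def sol (P Q X : Ctnr) (β : coprodC Q (seqC X P) ⟶ X) :
    ∀ t : WTree P, (q : t.Leaf → Q.I) →
      Σ x : X.I, X.A x → Σ l : t.Leaf, Q.A (q l)
  | .leaf => fun q => ⟨β.fwd (.inl (q PUnit.unit)),
      fun d => ⟨PUnit.unit, β.bwd (.inl (q PUnit.unit)) d⟩⟩
  | .node i k => fun q =>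
      ⟨β.fwd (.inr ⟨i, fun a => (sol P Q X β (k a) (fun l => q ⟨a, l⟩)).1⟩),
       fun d =>
         let p := β.bwd (.inr ⟨i, fun a => (sol P Q X β (k a) (fun l => q ⟨a, l⟩)).1⟩) d
         let s := (sol P Q X β (k p.1) (fun l => q ⟨p.1, l⟩)).2 p.2
         ⟨⟨p.1, s.1⟩, s.2⟩⟩

/-- The fold as a container morphism. -/
def solHom (P Q X : Ctnr) (β : coprodC Q (seqC X P) ⟶ X) : seqC Q (diamondC P) ⟶ X where
  fwd s := (sol P Q X β s.1 s.2).1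
  bwd s := (sol P Q X β s.1 s.2).2

def packHom {A B : Ctnr} (f : A ⟶ B) : ∀ s : A.I, Σ j : B.I, (B.A j → A.A s) :=
  fun s => ⟨f.fwd s, f.bwd s⟩

def unpackHom {A B : Ctnr} (h : ∀ s : A.I, Σ j : B.I, (B.A j → A.A s)) : A ⟶ B :=
  ⟨fun s => (h s).1, fun s => (h s).2⟩

theorem hom_ext' {A B : Ctnr} {f g : A ⟶ B}
    (h : ∀ s, packHom f s = packHom g s) : f = g :=
  congrArg unpackHom (funext h)

/-- `Q ⋆ P^◇` carries an initial algebra structure for the endofunctor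
`X ↦ Q + X ⋆ P` on containers over `Set`. -/
theorem seq_diamond_initial_algebra (P Q : Ctnr) :
    ∃ α : coprodC Q (seqC (seqC Q (diamondC P)) P) ⟶ seqC Q (diamondC P),
      ∀ (X : Ctnr) (β : coprodC Q (seqC X P) ⟶ X),
        ∃! f : seqC Q (diamondC P) ⟶ X,
          α ≫ f = coprodMap (𝟙 Q) (seqMap f (𝟙 P)) ≫ β := by
  refine ⟨algC P Q, fun X β => ⟨solHom P Q X β, ?_, ?_⟩⟩
  · apply hom_ext'
    rintro (j | x) <;> rfl
  · intro g hg
    have hpack : ∀ s, packHom (algC P Q ≫ g) s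
        = packHom (coprodMap (𝟙 Q) (seqMap g (𝟙 P)) ≫ β) s := fun s => by rw [hg]
    have key : ∀ (t : WTree P) (q : t.Leaf → Q.I),
        (⟨g.fwd ⟨t, q⟩, g.bwd ⟨t, q⟩⟩ : Σ x : X.I, X.A x → Σ l : t.Leaf, Q.A (q l))
          = sol P Q X β t q := by
      intro t
      induction t with
      | leaf =>
        intro q
        exact congrArg (fun p : Σ x : X.I, X.A x → Q.A (q PUnit.unit) =>
          (⟨p.1, fun d => ⟨PUnit.unit, p.2 d⟩⟩ :
            Σ x : X.I, X.A x → Σ l : WTree.Leaf (P := P) .leaf, Q.A (q l)))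
          (hpack (.inl (q PUnit.unit)))
      | node i k ih =>
        intro q
        have h1 := congrArg
          (fun p : Σ x : X.I, X.A x → Σ a : P.A i, Σ l : (k a).Leaf, Q.A (q ⟨a, l⟩) =>
            (⟨p.1, fun d => ⟨⟨(p.2 d).1, (p.2 d).2.1⟩, (p.2 d).2.2⟩⟩ :
              Σ x : X.I, X.A x → Σ l : WTree.Leaf (P := P) (.node i k), Q.A (q l)))
          (hpack (.inr ⟨i, fun a => (⟨k a, fun l => q ⟨a, l⟩⟩ :
            Σ t : WTree P, t.Leaf → Q.I)⟩))
        have hr : (fun a => (⟨g.fwd ⟨k a, fun l => q ⟨a, l⟩⟩,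
              g.bwd ⟨k a, fun l => q ⟨a, l⟩⟩⟩ :
              Σ x : X.I, X.A x → Σ l : (k a).Leaf, Q.A (q ⟨a, l⟩)))
            = fun a => sol P Q X β (k a) (fun l => q ⟨a, l⟩) :=
          funext fun a => ih a _
        exact h1.trans (congrArg
          (fun F : ∀ a : P.A i, Σ x : X.I, X.A x → Σ l : (k a).Leaf, Q.A (q ⟨a, l⟩) =>
            (⟨β.fwd (.inr ⟨i, fun a => (F a).1⟩),
              fun d =>
                let p := β.bwd (.inr ⟨i, fun a => (F a).1⟩) d
                let s := (F p.1).2 p.2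
                ⟨⟨p.1, s.1⟩, s.2⟩⟩ :
              Σ x : X.I, X.A x → Σ l : WTree.Leaf (P := P) (.node i k), Q.A (q l)))
          hr)
    exact hom_ext' fun s => key s.1 s.2
end

section
/- In Set, the ζ-fixpoint of the functor X ↦ P ⊗ X on containers equals the container P^ℕ : A^ℕ → I^ℕ (componentwise application of P); that is, the family (Π_{n∈ℕ} A_{s(n)})_{s : ℕ → I} is the carrier of a terminal coalgebra for the endofunctor on I^ℕ-indexed families sending (B_s)_s to (A_{s(0)} × B_{s∘succ})_s. -/
/-- The evident coalgebra map `Π_n A (s n) → A (s 0) × Π_n A (s (n+1))`. -/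
def streamStr {I : Type} (A : I → Type) (s : ℕ → I) :
    (∀ n : ℕ, A (s n)) → A (s 0) × ∀ n : ℕ, A (s (n + 1)) :=
  fun h => (h 0, fun n => h (n + 1))

private def corec {I : Type} (A : I → Type) (B : (ℕ → I) → Type)
    (β : ∀ s : ℕ → I, B s → A (s 0) × B (fun n => s (n + 1))) :
    ∀ (n : ℕ) (s : ℕ → I), B s → A (s n)
  | 0, s, b => (β s b).1
  | n + 1, s, b => corec A B β n (fun k => s (k + 1)) (β s b).2

/-- The ζ-fixpoint of `X ↦ P ⊗ X` on containers over `Set` is the container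
`P^ℕ : A^ℕ → I^ℕ`: the family `(Π_{n ∈ ℕ} A (s n))_{s : ℕ → I}` is the carrier
of a terminal coalgebra for the endofunctor on `(ℕ → I)`-indexed families
sending `(B_s)` to `(A (s 0) × B (s ∘ succ))_s`. -/
theorem pi_family_terminal_coalgebra {I : Type} (A : I → Type)
    (B : (ℕ → I) → Type)
    (β : ∀ s : ℕ → I, B s → A (s 0) × B (fun n => s (n + 1))) :
    ∃! f : ∀ s : ℕ → I, B s → ∀ n : ℕ, A (s n),
      ∀ (s : ℕ → I) (b : B s),
        streamStr A s (f s b) = Prod.map id (f (fun n => s (n + 1))) (β s b) := by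
  refine ⟨fun s b n => corec A B β n s b, fun s b => rfl, ?_⟩
  intro g hg
  funext s b n
  induction n generalizing s b with
  | zero =>
    have := congrArg Prod.fst (hg s b)
    exact this
  | succ n ih =>
    have h2 := congrArg Prod.snd (hg s b)
    have := congrFun h2 n
    simp only [streamStr, Prod.map] at this
    rw [this, ih]
    rfl
end
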